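/- For p > 2, if A' is A with additional rows appended and w̄, w̄' are the respective ℓ_p Lewis weights, then A'ᵀ(W̄')^{1−2/p}A' ⪰ d^{2/p−1} · AᵀW̄^{1−2/p}A in the Loewner order; in particular the Lewis weight of any original row increases by a factor at most d^{p/2−1}. -/

import Mathlib

/-!
Write `M = AᵀW^{1-2/p}A` and `M'` likewise. The Lewis equations say `aᵢᵀM⁻¹aᵢ = wᵢ^{2/p}`, so
`∑ wᵢ = tr (M⁻¹M) = d`. Hölder with exponents `p/(p-2)` and `p/2` gives
`xᵀMx ≤ (∑ wᵢ)^{1-2/p} ‖Ax‖ₚ²`. Cauchy–Schwarz in the geometry of `M'` gives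
`|a'ⱼ·x|² ≤ w'ⱼ^{2/p} xᵀM'x`, hence `|a'ⱼ·x|^p ≤ w'ⱼ^{1-2/p} |a'ⱼ·x|² (xᵀM'x)^{p/2-1}`, and
summing over `j` yields `‖A'x‖ₚ^p ≤ (xᵀM'x)^{p/2}`. As the rows of `A` are rows of `A'`,
`‖Ax‖ₚ ≤ ‖A'x‖ₚ`, so `M ⪯ d^{1-2/p} M'`. Inversion reverses the Loewner order, and evaluating
`aᵢᵀ(·)⁻¹aᵢ` on both sides bounds the new weights.
-/

open Matrix Finset

section Gram

variable {ι κ : Type*} [Fintype ι] [Fintype κ] [DecidableEq ι]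

lemma dotProduct_mulVec_transpose_diagonal_mul (A : Matrix ι κ ℝ) (u : ι → ℝ) (x : κ → ℝ) :
    x ⬝ᵥ (Aᵀ * diagonal u * A) *ᵥ x = ∑ i, u i * (A *ᵥ x) i ^ 2 := by
  rw [← mulVec_mulVec, ← mulVec_mulVec, dotProduct_mulVec, vecMul_transpose]
  simp only [dotProduct, mulVec_diagonal]
  exact sum_congr rfl fun i _ => by ring

lemma sum_mul_dotProduct_mulVec_eq_trace_mul (A : Matrix ι κ ℝ) (u : ι → ℝ)
    (N : Matrix κ κ ℝ) :
    ∑ i, u i * (A i ⬝ᵥ N *ᵥ A i) = trace (N * (Aᵀ * diagonal u * A)) := by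
  rw [show N * (Aᵀ * diagonal u * A) = N * (Aᵀ * diagonal u) * A by simp only [Matrix.mul_assoc],
    trace_mul_comm, ← Matrix.mul_assoc, ← Matrix.mul_assoc]
  simp only [trace, Matrix.diag, mul_diagonal]
  simp only [mul_apply, transpose_apply, dotProduct, mulVec, mul_sum, sum_mul]
  refine sum_congr rfl fun i _ => ?_
  rw [sum_comm]
  exact sum_congr rfl fun k _ => sum_congr rfl fun l _ => by ring

end Gram

lemma mulVec_injective_of_rank_eq_card {ι κ : Type*} [Fintype κ]
    {A : Matrix ι κ ℝ} (hA : A.rank = Fintype.card κ) : Function.Injective A.mulVec := by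
  rw [mulVec_injective_iff, linearIndependent_iff_card_eq_finrank_span, Set.finrank,
    ← rank_eq_finrank_span_cols, hA]

lemma mulVec_injective_of_rows {ι ι' κ : Type*} [Fintype κ] {A : Matrix ι κ ℝ}
    {A' : Matrix ι' κ ℝ} (f : ι → ι') (hrows : ∀ i, A' (f i) = A i)
    (hA : Function.Injective A.mulVec) : Function.Injective A'.mulVec := fun x y hxy =>
  hA <| funext fun i => by simpa [mulVec, hrows] using congrFun hxy (f i)

section InverseForm

variable {κ : Type*} [Fintype κ] {M M' : Matrix κ κ ℝ}

lemma posSemidef_sub_inv_smul (hM : M.IsHermitian) (hM' : M'.PosSemidef) {c : ℝ} (hc : 0 ≤ c)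
    (h : ∀ x, x ⬝ᵥ M *ᵥ x ≤ c * (x ⬝ᵥ M' *ᵥ x)) : (M' - c⁻¹ • M).PosSemidef := by
  refine .of_dotProduct_mulVec_nonneg (hM'.isHermitian.sub (hM.smul (IsSelfAdjoint.all _)))
    fun x => ?_
  have hx := hM'.dotProduct_mulVec_nonneg x
  simp only [star_trivial] at hx ⊢
  rw [sub_mulVec, dotProduct_sub, smul_mulVec, dotProduct_smul, smul_eq_mul, sub_nonneg]
  rcases hc.eq_or_lt with rfl | hc
  · simpa using hx
  · rw [inv_mul_le_iff₀ hc]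
    exact h x

variable [DecidableEq κ]

lemma mulVec_inv_mulVec_of_posDef (hM : M.PosDef) (a : κ → ℝ) : M *ᵥ M⁻¹ *ᵥ a = a := by
  rw [mulVec_mulVec, mul_nonsing_inv _ ((isUnit_iff_isUnit_det M).mp hM.isUnit), one_mulVec]

lemma two_mul_dotProduct_sub_le (hM : M.PosDef) (a x : κ → ℝ) :
    2 * (a ⬝ᵥ x) - x ⬝ᵥ M *ᵥ x ≤ a ⬝ᵥ M⁻¹ *ᵥ a := by
  set y := M⁻¹ *ᵥ a
  have hMy : M *ᵥ y = a := mulVec_inv_mulVec_of_posDef hM a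
  have hyM : y ᵥ* M = a := by
    rw [← hMy, ← vecMul_transpose, ← conjTranspose_eq_transpose_of_trivial, hM.isHermitian.eq]
  have h := hM.posSemidef.dotProduct_mulVec_nonneg (y - x)
  simp only [star_trivial, mulVec_sub, dotProduct_sub, sub_dotProduct, hMy] at h
  rw [dotProduct_mulVec y, hyM, dotProduct_comm y, dotProduct_comm x] at h
  linarith

lemma sq_dotProduct_le (hM : M.PosDef) (a x : κ → ℝ) :
    (a ⬝ᵥ x) ^ 2 ≤ (a ⬝ᵥ M⁻¹ *ᵥ a) * (x ⬝ᵥ M *ᵥ x) := by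
  have h := discrim_le_zero (a := x ⬝ᵥ M *ᵥ x) (b := -2 * (a ⬝ᵥ x)) (c := a ⬝ᵥ M⁻¹ *ᵥ a)
    fun t => by
      have := two_mul_dotProduct_sub_le hM a (t • x)
      simp only [dotProduct_smul, mulVec_smul, smul_dotProduct, smul_eq_mul] at this
      linarith
  rw [discrim] at h
  linarith

lemma dotProduct_inv_mulVec_le (hM : M.PosDef) (hM' : M'.PosDef) {c : ℝ} (hc : 0 < c)
    (h : ∀ x, x ⬝ᵥ M *ᵥ x ≤ c * (x ⬝ᵥ M' *ᵥ x)) (a : κ → ℝ) :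
    a ⬝ᵥ M'⁻¹ *ᵥ a ≤ c * (a ⬝ᵥ M⁻¹ *ᵥ a) := by
  -- test the variational bound for `M⁻¹` at `x = c⁻¹ M'⁻¹ a`
  have hy : c⁻¹ * ((M'⁻¹ *ᵥ a) ⬝ᵥ M *ᵥ M'⁻¹ *ᵥ a) ≤ a ⬝ᵥ M'⁻¹ *ᵥ a := by
    have := h (M'⁻¹ *ᵥ a)
    rwa [mulVec_inv_mulVec_of_posDef hM' a, dotProduct_comm _ a, ← inv_mul_le_iff₀ hc] at this
  have h2 := two_mul_dotProduct_sub_le hM a (c⁻¹ • M'⁻¹ *ᵥ a)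
  simp only [dotProduct_smul, mulVec_smul, smul_dotProduct, smul_eq_mul] at h2
  rw [← inv_mul_le_iff₀ hc]
  nlinarith [mul_le_mul_of_nonneg_left hy (inv_nonneg.2 hc.le)]

end InverseForm

lemma sq_rpow_le_of_sq_le {p y W Q : ℝ} (hp : 2 ≤ p) (hW : 0 ≤ W) (hQ : 0 ≤ Q)
    (h : y ^ 2 ≤ W ^ (2 / p) * Q) :
    (y ^ 2) ^ (p / 2) ≤ W ^ (1 - 2 / p) * Q ^ (p / 2 - 1) * y ^ 2 := by
  have hp0 : p ≠ 0 := by positivity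
  calc (y ^ 2) ^ (p / 2) = (y ^ 2) ^ (p / 2 - 1) * y ^ 2 := by
        rw [← Real.rpow_add_one' (sq_nonneg y) (by simp [hp0]), sub_add_cancel]
    _ ≤ (W ^ (2 / p) * Q) ^ (p / 2 - 1) * y ^ 2 := by
        gcongr
        linarith
    _ = W ^ (1 - 2 / p) * Q ^ (p / 2 - 1) * y ^ 2 := by
        rw [Real.mul_rpow (by positivity) hQ, ← Real.rpow_mul hW]
        congr 3
        field_simp

section Lewis

variable {ι κ : Type*} [Fintype ι] [Fintype κ] [DecidableEq ι]
  {A : Matrix ι κ ℝ} {p : ℝ} {w : ι → ℝ}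

noncomputable def lewisGram (A : Matrix ι κ ℝ) (p : ℝ) (w : ι → ℝ) : Matrix κ κ ℝ :=
  Aᵀ * diagonal (fun i => w i ^ (1 - 2 / p)) * A

lemma posSemidef_lewisGram (hw : ∀ i, 0 ≤ w i) : (lewisGram A p w).PosSemidef := by
  simpa [lewisGram] using
    (PosSemidef.diagonal fun i => Real.rpow_nonneg (hw i) _).conjTranspose_mul_mul_same A

lemma posDef_lewisGram (hA : Function.Injective A.mulVec) (hw : ∀ i, 0 < w i) :
    (lewisGram A p w).PosDef := by
  simpa [lewisGram] using
    (PosDef.diagonal fun i => Real.rpow_pos_of_pos (hw i) _).conjTranspose_mul_mul_same hA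

lemma dotProduct_lewisGram_mulVec_le_holder (hp : 2 < p) (hw : ∀ i, 0 ≤ w i) (x : κ → ℝ) :
    x ⬝ᵥ lewisGram A p w *ᵥ x ≤
      (∑ i, w i) ^ (1 - 2 / p) * (∑ i, ((A *ᵥ x) i ^ 2) ^ (p / 2)) ^ (2 / p) := by
  have hp0 : p ≠ 0 := by positivity
  have hp2 : p - 2 ≠ 0 := by linarith
  have hpq : (p / (p - 2)).HolderConjugate (p / 2) :=
    ((Real.holderConjugate_iff_eq_conjExponent (by linarith)).2 (by field_simp)).symm
  have hu : ∀ i, (w i ^ (1 - 2 / p)) ^ (p / (p - 2)) = w i := fun i => by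
    rw [← Real.rpow_mul (hw i), show (1 - 2 / p) * (p / (p - 2)) = 1 by field_simp,
      Real.rpow_one]
  have := Real.inner_le_Lp_mul_Lq_of_nonneg univ hpq (f := fun i => w i ^ (1 - 2 / p))
    (g := fun i => (A *ᵥ x) i ^ 2) (fun i _ => Real.rpow_nonneg (hw i) _) (fun i _ => sq_nonneg _)
  rw [lewisGram, dotProduct_mulVec_transpose_diagonal_mul]
  convert this using 3
  · simp only [hu]
  · rw [one_div, inv_div]
    field_simp
  · rw [one_div, inv_div]

variable [DecidableEq κ]

structure IsLewisWeight (A : Matrix ι κ ℝ) (p : ℝ) (w : ι → ℝ) : Prop where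
  pos : ∀ i, 0 < w i
  leverage_rpow : ∀ i, (A i ⬝ᵥ (lewisGram A p w)⁻¹ *ᵥ A i) ^ (p / 2) = w i

namespace IsLewisWeight

lemma leverage_eq (hL : IsLewisWeight A p w) (hp : p ≠ 0) (i : ι) :
    A i ⬝ᵥ (lewisGram A p w)⁻¹ *ᵥ A i = w i ^ (2 / p) := by
  have h0 : 0 ≤ A i ⬝ᵥ (lewisGram A p w)⁻¹ *ᵥ A i := by
    simpa using (posSemidef_lewisGram fun i => (hL.pos i).le).inv.dotProduct_mulVec_nonneg (A i)
  rw [← hL.leverage_rpow i, ← Real.rpow_mul h0, show p / 2 * (2 / p) = 1 by field_simp,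
    Real.rpow_one]

lemma sum_eq_card (hL : IsLewisWeight A p w) (hA : Function.Injective A.mulVec) (hp : p ≠ 0) :
    ∑ i, w i = Fintype.card κ := by
  have hM := posDef_lewisGram (p := p) hA hL.pos
  calc ∑ i, w i = ∑ i, w i ^ (1 - 2 / p) * (A i ⬝ᵥ (lewisGram A p w)⁻¹ *ᵥ A i) := by
        refine sum_congr rfl fun i _ => ?_
        rw [hL.leverage_eq hp, ← Real.rpow_add (hL.pos i), sub_add_cancel, Real.rpow_one]
    _ = trace ((lewisGram A p w)⁻¹ * lewisGram A p w) :=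
        sum_mul_dotProduct_mulVec_eq_trace_mul A _ _
    _ = Fintype.card κ := by
        rw [nonsing_inv_mul _ ((isUnit_iff_isUnit_det _).mp hM.isUnit), trace_one]

lemma sum_sq_rpow_le (hL : IsLewisWeight A p w) (hA : Function.Injective A.mulVec) (hp : 2 ≤ p)
    (x : κ → ℝ) :
    ∑ i, ((A *ᵥ x) i ^ 2) ^ (p / 2) ≤ (x ⬝ᵥ lewisGram A p w *ᵥ x) ^ (p / 2) := by
  have hM := posDef_lewisGram (p := p) hA hL.pos
  have hQ : 0 ≤ x ⬝ᵥ lewisGram A p w *ᵥ x := by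
    simpa using hM.posSemidef.dotProduct_mulVec_nonneg x
  have hrow (i : ι) : (A *ᵥ x) i ^ 2 ≤ w i ^ (2 / p) * (x ⬝ᵥ lewisGram A p w *ᵥ x) := by
    rw [← hL.leverage_eq (by positivity)]
    exact sq_dotProduct_le hM (A i) x
  calc ∑ i, ((A *ᵥ x) i ^ 2) ^ (p / 2)
      ≤ ∑ i, w i ^ (1 - 2 / p) * (x ⬝ᵥ lewisGram A p w *ᵥ x) ^ (p / 2 - 1) * (A *ᵥ x) i ^ 2 :=
        sum_le_sum fun i _ => sq_rpow_le_of_sq_le hp (hL.pos i).le hQ (hrow i)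
    _ = (x ⬝ᵥ lewisGram A p w *ᵥ x) ^ (p / 2 - 1) * (x ⬝ᵥ lewisGram A p w *ᵥ x) := by
        rw [lewisGram, dotProduct_mulVec_transpose_diagonal_mul, mul_sum]
        exact sum_congr rfl fun i _ => by ring
    _ = (x ⬝ᵥ lewisGram A p w *ᵥ x) ^ (p / 2) := by
        rw [← Real.rpow_add_one' hQ (by simp; positivity), sub_add_cancel]

end IsLewisWeight

end Lewis

section Rows

variable {ι ι' κ : Type*} [Fintype ι] [Fintype ι'] [Fintype κ] [DecidableEq ι] [DecidableEq ι']
  [DecidableEq κ] {A : Matrix ι κ ℝ} {A' : Matrix ι' κ ℝ} {p : ℝ} {w : ι → ℝ} {w' : ι' → ℝ}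

lemma IsLewisWeight.dotProduct_lewisGram_mulVec_le_of_rows (hL : IsLewisWeight A p w)
    (hL' : IsLewisWeight A' p w') (f : ι ↪ ι') (hrows : ∀ i, A' (f i) = A i) (hp : 2 < p)
    (hA : Function.Injective A.mulVec) (x : κ → ℝ) :
    x ⬝ᵥ lewisGram A p w *ᵥ x ≤
      (Fintype.card κ : ℝ) ^ (1 - 2 / p) * (x ⬝ᵥ lewisGram A' p w' *ᵥ x) := by
  have hp0 : p ≠ 0 := by positivity
  have hQ' : 0 ≤ x ⬝ᵥ lewisGram A' p w' *ᵥ x := by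
    simpa using (posSemidef_lewisGram fun j => (hL'.pos j).le).dotProduct_mulVec_nonneg x
  have hsub : ∑ i, ((A *ᵥ x) i ^ 2) ^ (p / 2) ≤ ∑ j, ((A' *ᵥ x) j ^ 2) ^ (p / 2) := by
    calc ∑ i, ((A *ᵥ x) i ^ 2) ^ (p / 2) = ∑ j ∈ univ.map f, ((A' *ᵥ x) j ^ 2) ^ (p / 2) := by
          simp only [sum_map, mulVec, hrows]
      _ ≤ _ := sum_le_univ_sum_of_nonneg fun _ => Real.rpow_nonneg (sq_nonneg _) _
  calc x ⬝ᵥ lewisGram A p w *ᵥ x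
      ≤ (∑ i, w i) ^ (1 - 2 / p) * (∑ i, ((A *ᵥ x) i ^ 2) ^ (p / 2)) ^ (2 / p) :=
        dotProduct_lewisGram_mulVec_le_holder hp (fun i => (hL.pos i).le) x
    _ ≤ (Fintype.card κ : ℝ) ^ (1 - 2 / p) *
          ((x ⬝ᵥ lewisGram A' p w' *ᵥ x) ^ (p / 2)) ^ (2 / p) := by
        rw [hL.sum_eq_card hA hp0]
        gcongr
        exact hsub.trans (hL'.sum_sq_rpow_le (mulVec_injective_of_rows f hrows hA) hp.le x)
    _ = (Fintype.card κ : ℝ) ^ (1 - 2 / p) * (x ⬝ᵥ lewisGram A' p w' *ᵥ x) := by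
        rw [← Real.rpow_mul hQ', show p / 2 * (2 / p) = 1 by field_simp, Real.rpow_one]

lemma IsLewisWeight.le_card_rpow_mul_of_rows (hL : IsLewisWeight A p w)
    (hL' : IsLewisWeight A' p w') (f : ι ↪ ι') (hrows : ∀ i, A' (f i) = A i) (hp : 2 < p)
    (hA : Function.Injective A.mulVec) (i : ι) :
    w' (f i) ≤ (Fintype.card κ : ℝ) ^ (p / 2 - 1) * w i := by
  have hp0 : p ≠ 0 := by positivity
  have hcard : (0 : ℝ) < Fintype.card κ :=
    hL.sum_eq_card hA hp0 ▸ sum_pos (fun i _ => hL.pos i) ⟨i, mem_univ i⟩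
  have h := dotProduct_inv_mulVec_le (posDef_lewisGram hA hL.pos)
    (posDef_lewisGram (mulVec_injective_of_rows f hrows hA) hL'.pos)
    (Real.rpow_pos_of_pos hcard (1 - 2 / p))
    (hL.dotProduct_lewisGram_mulVec_le_of_rows hL' f hrows hp hA) (A i)
  rw [← hrows i, hL'.leverage_eq hp0, hrows i, hL.leverage_eq hp0] at h
  calc w' (f i) = (w' (f i) ^ (2 / p)) ^ (p / 2) := by
        rw [← Real.rpow_mul (hL'.pos _).le, show 2 / p * (p / 2) = 1 by field_simp, Real.rpow_one]
    _ ≤ ((Fintype.card κ : ℝ) ^ (1 - 2 / p) * w i ^ (2 / p)) ^ (p / 2) :=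
        Real.rpow_le_rpow (Real.rpow_nonneg (hL'.pos _).le _) h (by positivity)
    _ = (Fintype.card κ : ℝ) ^ (p / 2 - 1) * w i := by
        rw [Real.mul_rpow (by positivity) (Real.rpow_nonneg (hL.pos i).le _),
          ← Real.rpow_mul hcard.le, ← Real.rpow_mul (hL.pos i).le, show 2 / p * (p / 2) = 1 by field_simp, Real.rpow_one,
          show (1 - 2 / p) * (p / 2) = p / 2 - 1 by field_simp]

end Rows

theorem stmt13 {n m d : ℕ} (A : Matrix (Fin n) (Fin d) ℝ) (A' : Matrix (Fin m) (Fin d) ℝ)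
    (f : Fin n ↪ Fin m) (hA : A.rank = d) (hrows : ∀ i : Fin n, A' (f i) = A i)
    (p : ℝ) (hp : 2 < p)
    (w : Fin n → ℝ) (w' : Fin m → ℝ)
    (hw : ∀ i, 0 < w i) (hw' : ∀ i, 0 < w' i)
    (hlewis : ∀ i,
      (A i ⬝ᵥ (Aᵀ * Matrix.diagonal (fun j => w j ^ (1 - 2 / p)) * A)⁻¹.mulVec (A i)) ^ (p / 2)
        = w i)
    (hlewis' : ∀ i,
      (A' i ⬝ᵥ (A'ᵀ * Matrix.diagonal (fun j => w' j ^ (1 - 2 / p)) * A')⁻¹.mulVec (A' i)) ^ (p / 2)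
        = w' i) :
    (A'ᵀ * Matrix.diagonal (fun j => w' j ^ (1 - 2 / p)) * A'
        - ((d : ℝ) ^ (2 / p - 1)) • (Aᵀ * Matrix.diagonal (fun j => w j ^ (1 - 2 / p)) * A)).PosSemidef ∧
      ∀ i : Fin n, w' (f i) ≤ (d : ℝ) ^ (p / 2 - 1) * w i := by
  have hinj : Function.Injective A.mulVec :=
    mulVec_injective_of_rank_eq_card (by rw [hA, Fintype.card_fin])
  have hL : IsLewisWeight A p w := ⟨hw, hlewis⟩
  have hL' : IsLewisWeight A' p w' := ⟨hw', hlewis'⟩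
  refine ⟨?_, fun i => by simpa using hL.le_card_rpow_mul_of_rows hL' f hrows hp hinj i⟩
  rw [show 2 / p - 1 = -(1 - 2 / p) by ring, Real.rpow_neg d.cast_nonneg]
  refine posSemidef_sub_inv_smul (posSemidef_lewisGram fun i => (hw i).le).isHermitian
    (posSemidef_lewisGram fun i => (hw' i).le) (by positivity) fun x => ?_
  simpa using hL.dotProduct_lewisGram_mulVec_le_of_rows hL' f hrows hp hinj x
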